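/- arXiv:2207.13581 — 3 statements merged into one kernel-verified Lean document; each statement's English description precedes it below -/
import Mathlib

section
/- Let D be a compact metric space and let Z be a Gaussian process on D with continuous sample paths, defined on a probability space (Ω, 𝓕, ℙ). Then the pushforward measure μ_Z := ℙ ∘ Φ^{-1} on C(D), where Φ(ω) = Z(·, ω), is a well-defined Borel probability measure on C(D) and is Gaussian, i.e., for every continuous linear functional ℓ ∈ C(D)*, the pushforward ℓ_# μ_Z is a Gaussian measure on ℝ. -/
open MeasureTheory ProbabilityTheory NNReal ENNReal Filter Real Topology

namespace Stmt2Aux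

lemma integrable_bdd {α : Type*} [MeasurableSpace α] {μ : Measure α} [IsFiniteMeasure μ]
    {f : α → ℝ} (hf : AEStronglyMeasurable f μ) (C : ℝ) (hb : ∀ x, |f x| ≤ C) :
    Integrable f μ :=
  Integrable.mono' (integrable_const C) hf (ae_of_all _ fun x => by
    simpa [Real.norm_eq_abs] using hb x)

lemma gauss_affine (m : ℝ) (v : ℝ≥0) :
    gaussianReal m v = (gaussianReal 0 1).map (fun x => Real.sqrt v * x + m) := by
  have h1 : (gaussianReal 0 1).map (fun x => Real.sqrt v * x) = gaussianReal 0 v := by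
    rw [show (fun x => Real.sqrt v * x) = (Real.sqrt v * ·) from rfl,
      gaussianReal_map_const_mul]
    congr 1
    · ring
    · ext
      simp [sq, Real.mul_self_sqrt v.coe_nonneg]
  have h2 : (fun x => Real.sqrt v * x + m) = (· + m) ∘ (fun x => Real.sqrt v * x) := rfl
  rw [h2, ← Measure.map_map (measurable_id'.add_const m) (measurable_const_mul _), h1,
    gaussianReal_map_add_const, zero_add]

lemma gauss_param_tendsto (mk : ℕ → ℝ) (vk : ℕ → ℝ≥0) (m' : ℝ) (v' : ℝ≥0)
    (hm : Tendsto mk atTop (𝓝 m')) (hv : Tendsto (fun k => (vk k : ℝ)) atTop (𝓝 (v' : ℝ)))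
    (f : ℝ → ℝ) (C : ℝ) (hf : Continuous f) (hb : ∀ x, |f x| ≤ C) :
    Tendsto (fun k => ∫ x, f x ∂(gaussianReal (mk k) (vk k))) atTop
      (𝓝 (∫ x, f x ∂(gaussianReal m' v'))) := by
  have hrw : ∀ (a : ℝ) (b : ℝ≥0), ∫ x, f x ∂(gaussianReal a b)
      = ∫ x, f (Real.sqrt b * x + a) ∂(gaussianReal 0 1) := by
    intro a b
    rw [gauss_affine a b, integral_map ((measurable_const_mul _).add_const _).aemeasurable
      hf.measurable.aestronglyMeasurable]
  simp_rw [hrw]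
  apply tendsto_integral_of_dominated_convergence (fun _ => C)
  · exact fun k => (hf.measurable.comp ((measurable_const_mul _).add_const _)).aestronglyMeasurable
  · exact integrable_const C
  · exact fun k => ae_of_all _ fun x => by simpa [Real.norm_eq_abs] using hb _
  · refine ae_of_all _ fun x => ?_
    apply (hf.tendsto _).comp
    have hs : Tendsto (fun k => Real.sqrt (vk k)) atTop (𝓝 (Real.sqrt v')) :=
      (Real.continuous_sqrt.tendsto _).comp hv
    exact (hs.mul tendsto_const_nhds).add hm

lemma gauss_Iio_le (m : ℝ) (v : ℝ≥0) : gaussianReal m v (Set.Iio m) ≤ 1/2 ∧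
    gaussianReal m v (Set.Ioi m) ≤ 1/2 := by
  have hmap : (gaussianReal m v).map (fun x => (-1 : ℝ) * x + 2 * m) = gaussianReal m v := by
    rw [show (fun x => (-1:ℝ) * x + 2*m) = (· + 2*m) ∘ ((-1 : ℝ) * ·) from rfl,
      ← Measure.map_map (measurable_id'.add_const _) (measurable_const_mul _),
      gaussianReal_map_const_mul, gaussianReal_map_add_const]
    congr 1
    · ring
    · ext; simp
  have hmeas : Measurable (fun x => (-1 : ℝ) * x + 2 * m) :=
    (measurable_const_mul _).add_const _
  have key : gaussianReal m v (Set.Iio m) = gaussianReal m v (Set.Ioi m) := by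
    conv_lhs => rw [← hmap]
    rw [Measure.map_apply hmeas measurableSet_Iio]
    congr 1
    ext x
    simp only [Set.mem_preimage, Set.mem_Iio, Set.mem_Ioi]
    constructor <;> intro h <;> linarith
  have hsum : gaussianReal m v (Set.Iio m) + gaussianReal m v (Set.Ioi m) ≤ 1 := by
    rw [← measure_union (by rw [Set.disjoint_left]; intro a h1 h2; exact absurd h1 (by simp only [Set.mem_Iio]; simp only [Set.mem_Ioi] at h2; linarith)) measurableSet_Ioi]
    exact (measure_mono (Set.subset_univ _)).trans_eq measure_univ
  rw [← key, ← two_mul] at hsum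
  have h2 : gaussianReal m v (Set.Iio m) ≤ 1/2 := by
    rw [ENNReal.le_div_iff_mul_le (Or.inl two_ne_zero) (Or.inl ENNReal.ofNat_ne_top), mul_comm]
    exact hsum
  exact ⟨h2, key ▸ h2⟩

lemma gauss_Icc_le (m : ℝ) {v : ℝ≥0} (hv : v ≠ 0) (a b : ℝ) :
    gaussianReal m v (Set.Icc a b) ≤
      ENNReal.ofReal ((b - a) * (Real.sqrt (2 * π * v))⁻¹) := by
  rw [gaussianReal_apply m hv]
  have hpdf : ∀ x, gaussianPDF m v x ≤ ENNReal.ofReal ((Real.sqrt (2 * π * v))⁻¹) := by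
    intro x
    rw [gaussianPDF]
    apply ENNReal.ofReal_le_ofReal
    rw [gaussianPDFReal]
    calc (√(2 * π * v))⁻¹ * rexp (- (x - m)^2 / (2 * v)) ≤ (√(2 * π * v))⁻¹ * 1 := by
          apply mul_le_mul_of_nonneg_left _ (by positivity)
          rw [Real.exp_le_one_iff]
          apply div_nonpos_of_nonpos_of_nonneg (neg_nonpos.mpr (sq_nonneg _)) (by positivity)
      _ = _ := mul_one _
  calc ∫⁻ x in Set.Icc a b, gaussianPDF m v x
      ≤ ∫⁻ _ in Set.Icc a b, ENNReal.ofReal ((Real.sqrt (2 * π * v))⁻¹) :=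
        lintegral_mono hpdf
    _ = ENNReal.ofReal ((Real.sqrt (2 * π * v))⁻¹) * volume (Set.Icc a b) :=
        setLIntegral_const _ _
    _ = ENNReal.ofReal ((b - a) * (Real.sqrt (2 * π * v))⁻¹) := by
        rw [Real.volume_Icc, ← ENNReal.ofReal_mul (by positivity), mul_comm]

lemma gaussian_limit {Ω : Type*} [MeasurableSpace Ω] (P : Measure Ω) [IsProbabilityMeasure P]
    (X : ℕ → Ω → ℝ) (X' : Ω → ℝ) (hXm : ∀ n, Measurable (X n)) (hX'm : Measurable X')
    (m : ℕ → ℝ) (v : ℕ → ℝ≥0) (hlaw : ∀ n, P.map (X n) = gaussianReal (m n) (v n))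
    (hconv : ∀ ω, Tendsto (fun n => X n ω) atTop (𝓝 (X' ω))) :
    ∃ (m' : ℝ) (v' : ℝ≥0), P.map X' = gaussianReal m' v' := by
  set μ := P.map X' with hμdef
  haveI : IsProbabilityMeasure μ := Measure.isProbabilityMeasure_map hX'm.aemeasurable
  -- weak convergence of the laws
  have hweak : ∀ (f : ℝ → ℝ) (C : ℝ), Continuous f → (∀ x, |f x| ≤ C) →
      Tendsto (fun n => ∫ x, f x ∂(gaussianReal (m n) (v n))) atTop (𝓝 (∫ x, f x ∂μ)) := by
    intro f C hf hb
    have h1 : ∀ n, ∫ x, f x ∂(gaussianReal (m n) (v n)) = ∫ ω, f (X n ω) ∂P := by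
      intro n
      rw [← hlaw n, integral_map (hXm n).aemeasurable hf.measurable.aestronglyMeasurable]
    have h2 : ∫ x, f x ∂μ = ∫ ω, f (X' ω) ∂P :=
      integral_map hX'm.aemeasurable hf.measurable.aestronglyMeasurable
    simp_rw [h1, h2]
    apply tendsto_integral_of_dominated_convergence (fun _ => C)
    · exact fun n => (hf.measurable.comp (hXm n)).aestronglyMeasurable
    · exact integrable_const C
    · exact fun n => ae_of_all _ fun ω => by simpa [Real.norm_eq_abs] using hb (X n ω)
    · exact ae_of_all _ fun ω => (hf.tendsto _).comp (hconv ω)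
  -- choose M capturing most of the mass of μ
  obtain ⟨M, hM1, hMgt⟩ : ∃ M : ℝ, 1 ≤ M ∧ (3/4 : ℝ≥0∞) < μ (Set.Icc (-M) M) := by
    have hU : Tendsto (fun n : ℕ => μ (Set.Icc (-(n:ℝ)) n)) atTop (𝓝 (μ Set.univ)) := by
      rw [show (Set.univ : Set ℝ) = ⋃ n : ℕ, Set.Icc (-(n:ℝ)) n by
        ext x
        simp only [Set.mem_univ, Set.mem_iUnion, Set.mem_Icc, true_iff]
        obtain ⟨n, hn⟩ := exists_nat_ge |x|
        exact ⟨n, by obtain ⟨h1, h2⟩ := abs_le.mp hn; constructor <;> linarith⟩]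
      exact tendsto_measure_iUnion_atTop fun i j hij =>
        Set.Icc_subset_Icc (by simp only [neg_le_neg_iff, Nat.cast_le]; exact hij)
          (Nat.cast_le.mpr hij)
    rw [measure_univ] at hU
    have hev := hU.eventually_const_lt (show (3/4 : ℝ≥0∞) < 1 by
      rw [ENNReal.div_lt_iff (by norm_num) (by norm_num)]; norm_num)
    obtain ⟨n, hn⟩ := hev.exists
    refine ⟨max n 1, le_max_right _ _, lt_of_lt_of_le hn (measure_mono ?_)⟩
    exact Set.Icc_subset_Icc (neg_le_neg (le_max_left _ _)) (le_max_left _ _)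
  set s₀ : Set ℝ := Set.Icc (-M) M with hs₀def
  have hs₀ne : s₀.Nonempty := ⟨M, by constructor <;> linarith⟩
  set J : Set ℝ := Set.Icc (-(M+1)) (M+1) with hJdef
  -- the bump function g
  set g : ℝ → ℝ := fun x => max (1 - Metric.infDist x s₀) 0 with hgdef
  have hg_cont : Continuous g :=
    (continuous_const.sub (Metric.continuous_infDist_pt s₀)).max continuous_const
  have hg0 : ∀ x, 0 ≤ g x := fun x => le_max_right _ _
  have hg1 : ∀ x, g x ≤ 1 := fun x =>
    max_le (by linarith [Metric.infDist_nonneg (s := s₀) (x := x)]) zero_le_one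
  have hg_one : ∀ x ∈ s₀, g x = 1 := by
    intro x hx
    simp [hgdef, Metric.infDist_zero_of_mem hx]
  have hg_supp : ∀ x, g x ≠ 0 → x ∈ J := by
    intro x hx
    have h1 : Metric.infDist x s₀ < 1 := by
      by_contra h
      push_neg at h
      exact hx (max_eq_right (by linarith))
    obtain ⟨y, hy, hxy⟩ := isCompact_Icc.exists_infDist_eq_dist hs₀ne x
    rw [hxy, Real.dist_eq] at h1
    obtain ⟨hy1, hy2⟩ := hy
    obtain ⟨ha, hb⟩ := abs_lt.mp h1
    exact ⟨by linarith, by linarith⟩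
  -- comparison of integrals with measures
  have hgint : ∀ (ν : Measure ℝ) [IsFiniteMeasure ν], Integrable g ν := fun ν _ =>
    integrable_bdd hg_cont.measurable.aestronglyMeasurable 1
      (fun x => abs_le.mpr ⟨by linarith [hg0 x], hg1 x⟩)
  have hlow : (μ s₀).toReal ≤ ∫ x, g x ∂μ := by
    rw [← measureReal_def, ← integral_indicator_one (measurableSet_Icc : MeasurableSet s₀)]
    apply integral_mono ((integrable_const 1).indicator
      (measurableSet_Icc : MeasurableSet s₀)) (hgint μ)
    intro x
    by_cases hx : x ∈ s₀
    · simp [Set.indicator_of_mem (show x ∈ Set.Icc (-M) M from hx), (hg_one x hx).ge]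
    · simp [Set.indicator_of_notMem (show x ∉ Set.Icc (-M) M from hx), hg0 x]
  have hup : ∀ (ν : Measure ℝ) [IsProbabilityMeasure ν], ∫ x, g x ∂ν ≤ (ν J).toReal := by
    intro ν _
    rw [← measureReal_def, ← integral_indicator_one (measurableSet_Icc : MeasurableSet J)]
    apply integral_mono (hgint ν) ((integrable_const 1).indicator
      (measurableSet_Icc : MeasurableSet J))
    intro x
    rcases eq_or_ne (g x) 0 with hz | hz
    · rw [hz]
      exact Set.indicator_nonneg (fun _ _ => zero_le_one) x
    · have hx := hg_supp x hz
      rw [Set.indicator_of_mem hx]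
      exact hg1 x
  -- eventually much mass in J for the Gaussians
  have hkey : ∀ᶠ n in atTop, (3/4 : ℝ) < ((gaussianReal (m n) (v n)) J).toReal := by
    have h34 : (3/4 : ℝ) < ∫ x, g x ∂μ := by
      refine lt_of_lt_of_le ?_ hlow
      have h2 := (ENNReal.toReal_lt_toReal (by simp [ENNReal.div_eq_top])
        (measure_ne_top μ s₀)).mpr hMgt
      rwa [ENNReal.toReal_div, show ((3:ℝ≥0∞)).toReal / ((4:ℝ≥0∞)).toReal = 3/4 by norm_num]
        at h2
    have hev := (hweak g 1 hg_cont
      (fun x => abs_le.mpr ⟨by linarith [hg0 x], hg1 x⟩)).eventually_const_lt h34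
    filter_upwards [hev] with n hn
    exact lt_of_lt_of_le hn (hup _)
  -- deduce bounds on the means and variances
  set V : ℝ := ((8/3) * (M+1))^2 / (2 * π) with hVdef
  have hbound : ∀ᶠ n in atTop, |m n| ≤ M + 1 ∧ (v n : ℝ) ≤ V := by
    filter_upwards [hkey] with n hn
    have hJhalf : ¬ ((gaussianReal (m n) (v n)) J ≤ 1/2) := by
      intro hle
      have h2 := ENNReal.toReal_mono (by simp [ENNReal.div_eq_top]) hle
      rw [ENNReal.toReal_div, show ((1:ℝ≥0∞)).toReal / ((2:ℝ≥0∞)).toReal = 1/2 by norm_num]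
        at h2
      linarith
    constructor
    · by_contra h
      push_neg at h
      rcases lt_abs.mp h with hc | hc
      · refine hJhalf (le_trans (measure_mono ?_) (gauss_Iio_le (m n) (v n)).1)
        intro x hx
        obtain ⟨h1, h2⟩ := hx
        simp only [Set.mem_Iio]
        linarith
      · refine hJhalf (le_trans (measure_mono ?_) (gauss_Iio_le (m n) (v n)).2)
        intro x hx
        obtain ⟨h1, h2⟩ := hx
        simp only [Set.mem_Ioi]
        linarith
    · by_cases hv : v n = 0
      · rw [hv]
        push_cast
        positivity
      · have hle := gauss_Icc_le (m n) hv (-(M+1)) (M+1)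
        have htr := ENNReal.toReal_mono ENNReal.ofReal_ne_top hle
        have hvpos : (0:ℝ) < (v n : ℝ) := NNReal.coe_pos.mpr (pos_iff_ne_zero.mpr hv)
        have hsq : (0:ℝ) < Real.sqrt (2 * π * v n) :=
          Real.sqrt_pos.mpr (mul_pos (mul_pos two_pos Real.pi_pos) hvpos)
        rw [ENNReal.toReal_ofReal (mul_nonneg (by linarith) (inv_nonneg.mpr hsq.le))] at htr
        have hgt : (3/4 : ℝ) < (M + 1 - -(M+1)) * (Real.sqrt (2 * π * v n))⁻¹ :=
          lt_of_lt_of_le hn htr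
        have h2 : Real.sqrt (2 * π * v n) < (8/3) * (M + 1) := by
          rw [← div_eq_mul_inv] at hgt
          have h4 := (lt_div_iff₀ hsq).mp hgt
          linarith
        have h3 : 2 * π * (v n : ℝ) < ((8/3) * (M+1))^2 := by
          have := Real.sq_sqrt (show (0:ℝ) ≤ 2 * π * v n by positivity)
          nlinarith [hsq]
        rw [hVdef, le_div_iff₀ (by positivity)]
        nlinarith
  -- extract a convergent subsequence of the parameters
  obtain ⟨N, hN⟩ := eventually_atTop.mp hbound
  have hmem : ∀ k, (m (N + k), (v (N + k) : ℝ)) ∈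
      Set.Icc (-(M+1)) (M+1) ×ˢ Set.Icc (0:ℝ) V := by
    intro k
    obtain ⟨h1, h2⟩ := hN (N + k) (Nat.le_add_right _ _)
    exact ⟨abs_le.mp h1, (v _).coe_nonneg, h2⟩
  obtain ⟨p, -, φ, hφ, hlim⟩ := tendsto_subseq_of_bounded
    ((isCompact_Icc.prod isCompact_Icc).isBounded) hmem
  have hmt : Tendsto (fun k => m (N + φ k)) atTop (𝓝 p.1) :=
    (continuous_fst.tendsto p).comp hlim
  have hvt : Tendsto (fun k => (v (N + φ k) : ℝ)) atTop (𝓝 p.2) :=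
    (continuous_snd.tendsto p).comp hlim
  have hp2 : 0 ≤ p.2 := ge_of_tendsto' hvt (fun k => (v _).coe_nonneg)
  refine ⟨p.1, p.2.toNNReal, ?_⟩
  have hsub : Tendsto (fun k => N + φ k) atTop atTop :=
    tendsto_atTop_mono (fun k => le_trans (hφ.le_apply) (Nat.le_add_left _ _)) tendsto_id
  apply ext_of_forall_lintegral_eq_of_IsFiniteMeasure
  intro f
  set fr : ℝ → ℝ := fun x => ((f x : ℝ≥0) : ℝ) with hfrdef
  have hfrc : Continuous fr := NNReal.continuous_coe.comp f.continuous
  obtain ⟨C, hC⟩ := f.bounded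
  set B : ℝ := C + fr 0 with hBdef
  have hfb : ∀ x, |fr x| ≤ B := by
    intro x
    rw [abs_of_nonneg (f x).coe_nonneg]
    have h1 : dist (f x) (f 0) ≤ C := hC x 0
    rw [NNReal.dist_eq] at h1
    have h2 := abs_le.mp h1
    simp only [hfrdef, hBdef] at *
    linarith [h2.2]
  have h1 : Tendsto (fun k => ∫ x, fr x ∂(gaussianReal (m (N + φ k)) (v (N + φ k)))) atTop
      (𝓝 (∫ x, fr x ∂μ)) := (hweak fr B hfrc hfb).comp hsub
  have h2 : Tendsto (fun k => ∫ x, fr x ∂(gaussianReal (m (N + φ k)) (v (N + φ k)))) atTop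
      (𝓝 (∫ x, fr x ∂(gaussianReal p.1 p.2.toNNReal))) := by
    apply gauss_param_tendsto _ _ _ _ hmt _ fr B hfrc hfb
    rwa [Real.coe_toNNReal _ hp2]
  have heq : ∫ x, fr x ∂μ = ∫ x, fr x ∂(gaussianReal p.1 p.2.toNNReal) :=
    tendsto_nhds_unique h1 h2
  rw [lintegral_coe_eq_integral f (integrable_bdd hfrc.measurable.aestronglyMeasurable B hfb),
    lintegral_coe_eq_integral f (integrable_bdd hfrc.measurable.aestronglyMeasurable B hfb),
    heq]

end Stmt2Aux

/-- A Gaussian process with continuous sample paths on a compact metric space induces a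
well-defined (Borel) Gaussian measure on the Banach space `C(D, ℝ)`: the path map
`Φ : Ω → C(D, ℝ)` is measurable, and every continuous linear functional pushes the
induced measure forward to a Gaussian measure on `ℝ`. -/
theorem stmt_2 {D : Type*} [MetricSpace D] [CompactSpace D]
    {Ω : Type*} [MeasurableSpace Ω] (P : Measure Ω) [IsProbabilityMeasure P]
    (Z : Ω → C(D, ℝ))
    (hmeas : ∀ s : D, Measurable fun ω => Z ω s)
    (hgauss : ∀ (n : ℕ) (s : Fin n → D) (c : Fin n → ℝ),
      ∃ (m : ℝ) (v : ℝ≥0),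
        P.map (fun ω => ∑ i, c i * Z ω (s i)) = gaussianReal m v) :
    letI : MeasurableSpace C(D, ℝ) := borel C(D, ℝ)
    Measurable Z ∧
      ∀ ℓ : C(D, ℝ) →L[ℝ] ℝ, ∃ (m : ℝ) (v : ℝ≥0),
        P.map (fun ω => ℓ (Z ω)) = gaussianReal m v := by
  letI : MeasurableSpace C(D, ℝ) := borel C(D, ℝ)
  haveI : BorelSpace C(D, ℝ) := ⟨rfl⟩
  -- finite covers by small balls
  have hcov : ∀ n : ℕ, ∃ t : Finset D,
      (Set.univ : Set D) ⊆ ⋃ s ∈ t, Metric.ball s ((n+1:ℝ)⁻¹) := by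
    intro n
    exact isCompact_univ.elim_finite_subcover (fun s : D => Metric.ball s ((n+1:ℝ)⁻¹))
      (fun s => Metric.isOpen_ball)
      (fun x _ => Set.mem_iUnion.mpr ⟨x, Metric.mem_ball_self (by positivity)⟩)
  choose t ht using hcov
  set r : ℕ → ℝ := fun n => (n+1:ℝ)⁻¹ with hrdef
  have hr0 : ∀ n, 0 < r n := fun n => by rw [hrdef]; positivity
  -- partition of unity
  set ψ : ℕ → D → D → ℝ := fun n s x => max (r n - dist x s) 0 with hψdef
  have hψcont : ∀ n s, Continuous (ψ n s) := fun n s =>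
    (continuous_const.sub (continuous_id.dist continuous_const)).max continuous_const
  have hψ0 : ∀ n s x, 0 ≤ ψ n s x := fun n s x => le_max_right _ _
  set S : ℕ → D → ℝ := fun n x => ∑ s ∈ t n, ψ n s x with hSdef
  have hScont : ∀ n, Continuous (S n) := fun n => continuous_finset_sum _ fun s _ => hψcont n s
  have hSpos : ∀ n x, 0 < S n x := by
    intro n x
    obtain ⟨s, hst, hs⟩ := Set.mem_iUnion₂.mp (ht n (Set.mem_univ x))
    refine Finset.sum_pos' (fun i _ => hψ0 n i x) ⟨s, hst, ?_⟩
    rw [Metric.mem_ball] at hs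
    have hlt : 0 < r n - dist x s := by linarith
    exact lt_max_iff.mpr (Or.inl hlt)
  set φ : ℕ → D → C(D, ℝ) := fun n s => ⟨fun x => ψ n s x / S n x,
    (hψcont n s).div (hScont n) (fun x => (hSpos n x).ne')⟩ with hφdef
  have hφ0 : ∀ n s x, 0 ≤ φ n s x := fun n s x => div_nonneg (hψ0 n s x) (hSpos n x).le
  have hφapp : ∀ n s x, φ n s x = ψ n s x / S n x := fun n s x => rfl
  have hφsum : ∀ n x, ∑ s ∈ t n, φ n s x = 1 := by
    intro n x
    have hstep : ∑ s ∈ t n, φ n s x = (∑ s ∈ t n, ψ n s x) / S n x := by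
      rw [Finset.sum_div]
      rfl
    rw [hstep]
    exact div_self (hSpos n x).ne'
  have hφsupp : ∀ n s x, φ n s x ≠ 0 → dist x s < r n := by
    intro n s x h
    by_contra hd
    push_neg at hd
    apply h
    rw [hφapp, hψdef]
    simp only [max_eq_right (by linarith : r n - dist x s ≤ 0), zero_div]
  -- measurable approximants of Z
  set Y : ℕ → Ω → C(D, ℝ) := fun n ω => ∑ s ∈ t n, Z ω s • φ n s with hYdef
  have hYapp : ∀ n ω x, Y n ω x = ∑ s ∈ t n, Z ω s * φ n s x := by
    intro n ω x
    rw [hYdef]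
    simp
  have hYmeas : ∀ n, Measurable (Y n) := by
    intro n
    apply Finset.measurable_sum
    intro s _
    exact ((continuous_id.smul (continuous_const : Continuous fun _ : ℝ => φ n s)).measurable).comp
      (hmeas s)
  -- uniform convergence of the approximants
  have hYconv : ∀ ω, Tendsto (fun n => Y n ω) atTop (𝓝 (Z ω)) := by
    intro ω
    rw [Metric.tendsto_atTop]
    intro ε hε
    obtain ⟨δ, hδ0, hδ⟩ := Metric.uniformContinuous_iff.mp
      (CompactSpace.uniformContinuous_of_continuous (Z ω).continuous) (ε/2) (by linarith)
    obtain ⟨N, hN⟩ := exists_nat_gt δ⁻¹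
    refine ⟨N, fun n hn => ?_⟩
    have hrδ : r n ≤ δ := by
      rw [hrdef]
      have h1 : δ⁻¹ < (n:ℝ) + 1 := by
        have : (N:ℝ) ≤ n := Nat.cast_le.mpr hn
        linarith
      have h2 : (0:ℝ) < (n:ℝ) + 1 := by positivity
      rw [inv_le_comm₀ h2 hδ0]
      linarith
    have hd : dist (Y n ω) (Z ω) ≤ ε/2 := by
      rw [ContinuousMap.dist_le (by linarith)]
      intro x
      have h1 : Y n ω x - Z ω x = ∑ s ∈ t n, (Z ω s - Z ω x) * φ n s x := by
        rw [hYapp,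
          show ∑ s ∈ t n, (Z ω s - Z ω x) * φ n s x
              = ∑ s ∈ t n, Z ω s * φ n s x - ∑ s ∈ t n, Z ω x * φ n s x by
            rw [← Finset.sum_sub_distrib]
            congr 1
            funext s
            ring,
          ← Finset.mul_sum, hφsum, mul_one]
      rw [Real.dist_eq, h1]
      calc |∑ s ∈ t n, (Z ω s - Z ω x) * φ n s x|
          ≤ ∑ s ∈ t n, |(Z ω s - Z ω x) * φ n s x| := Finset.abs_sum_le_sum_abs _ _
        _ ≤ ∑ s ∈ t n, (ε/2) * φ n s x := by
            apply Finset.sum_le_sum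
            intro s _
            rw [abs_mul, abs_of_nonneg (hφ0 n s x)]
            rcases eq_or_ne (φ n s x) 0 with hz | hz
            · rw [hz, mul_zero, mul_zero]
            · apply mul_le_mul_of_nonneg_right _ (hφ0 n s x)
              have hdist : dist s x < δ := by
                rw [dist_comm]
                exact lt_of_lt_of_le (hφsupp n s x hz) hrδ
              rw [← Real.dist_eq]
              exact (hδ hdist).le
        _ = ε/2 := by rw [← Finset.mul_sum, hφsum, mul_one]
    calc dist (Y n ω) (Z ω) ≤ ε/2 := hd
      _ < ε := by linarith
  have hZmeas : Measurable Z :=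
    measurable_of_tendsto_metrizable hYmeas (tendsto_pi_nhds.mpr hYconv)
  refine ⟨hZmeas, fun ℓ => ?_⟩
  -- the approximating functionals are Gaussian
  have hlaw : ∀ n, ∃ (m : ℝ) (v : ℝ≥0),
      P.map (fun ω => ℓ (Y n ω)) = gaussianReal m v := by
    intro n
    obtain ⟨m, v, h⟩ := hgauss (t n).card (fun i => ((t n).equivFin.symm i : D))
      (fun i => ℓ (φ n ((t n).equivFin.symm i : D)))
    refine ⟨m, v, ?_⟩
    rw [← h]
    congr 1
    funext ω
    calc ℓ (Y n ω) = ∑ s ∈ t n, Z ω s * ℓ (φ n s) := by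
          rw [hYdef]
          rw [map_sum]
          simp_rw [_root_.map_smul, smul_eq_mul]
      _ = ∑ a : (t n), Z ω (a : D) * ℓ (φ n (a : D)) := (Finset.sum_coe_sort _ _).symm
      _ = ∑ i : Fin (t n).card,
            Z ω (((t n).equivFin.symm i : D)) * ℓ (φ n (((t n).equivFin.symm i : D))) :=
          (Equiv.sum_comp (t n).equivFin.symm
            (fun a : (t n) => Z ω (a : D) * ℓ (φ n (a : D)))).symm
      _ = ∑ i, ℓ (φ n (((t n).equivFin.symm i : D))) * Z ω (((t n).equivFin.symm i : D)) := by
          apply Finset.sum_congr rfl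
          intro i _
          ring
  choose ms vs hlaw using hlaw
  exact Stmt2Aux.gaussian_limit P (fun n ω => ℓ (Y n ω)) (fun ω => ℓ (Z ω))
    (fun n => ℓ.continuous.measurable.comp (hYmeas n))
    (ℓ.continuous.measurable.comp hZmeas) ms vs hlaw
    (fun ω => (ℓ.continuous.tendsto _).comp (hYconv ω))
end

section
/- An almost-surely convergent sequence of real Gaussian random variables converges to a Gaussian random variable: if (X_n) are Gaussian random variables on a probability space and X_n → X almost surely, then X is Gaussian (allowing degenerate, i.e., constant, limits). -/
open MeasureTheory ProbabilityTheory NNReal Filter Set Topology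

noncomputable def Gstd : ℝ → ℝ := cdf (gaussianReal 0 1)


lemma gauss_std_no_atom (x : ℝ) : gaussianReal 0 1 {x} = 0 := by
  rw [gaussianReal_of_var_ne_zero _ one_ne_zero]
  exact (withDensity_absolutelyContinuous _ _) (measure_singleton x)

lemma Gstd_cont : Continuous Gstd := by
  rw [continuous_iff_continuousAt]
  intro x
  have hmono : Monotone Gstd := monotone_cdf _
  rw [hmono.continuousAt_iff_leftLim_eq_rightLim]
  have hr : Function.rightLim Gstd x = Gstd x := by
    refine (hmono.continuousWithinAt_Ioi_iff_rightLim_eq).1 ?_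
    exact ((cdf (gaussianReal 0 1)).right_continuous x).mono Ioi_subset_Ici_self
  have hsing : (cdf (gaussianReal 0 1)).measure {x} = 0 := by
    rw [measure_cdf]; exact gauss_std_no_atom x
  rw [StieltjesFunction.measure_singleton] at hsing
  have hle : Function.leftLim Gstd x ≤ Gstd x := hmono.leftLim_le le_rfl
  have : Gstd x - Function.leftLim Gstd x ≤ 0 := by
    by_contra h
    push_neg at h
    exact (ENNReal.ofReal_pos.2 h).ne' hsing
  have heq : Function.leftLim Gstd x = Gstd x := le_antisymm hle (by linarith)
  rw [heq, hr]

lemma gauss_symm : (gaussianReal 0 1).map (fun x : ℝ => (-1) * x) = gaussianReal 0 1 := by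
  rw [gaussianReal_map_const_mul]
  congr 1
  · ring
  · ext
    norm_num

lemma Gstd_zero : Gstd 0 = 1/2 := by
  have h1 : gaussianReal 0 1 (Iic 0) = gaussianReal 0 1 (Ici 0) := by
    conv_lhs => rw [← gauss_symm]
    rw [Measure.map_apply (by fun_prop) measurableSet_Iic]
    congr 1
    ext x
    simp [neg_le]
  have h2 : gaussianReal 0 1 (Iic 0) + gaussianReal 0 1 (Ici 0)
      = gaussianReal 0 1 (Iic 0 ∪ Ici 0) + gaussianReal 0 1 (Iic 0 ∩ Ici 0) :=
    (measure_union_add_inter' measurableSet_Iic _).symm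
  rw [Iic_union_Ici, Iic_inter_Ici, Icc_self, gauss_std_no_atom, add_zero, measure_univ,
    ← h1] at h2
  have h3 : gaussianReal 0 1 (Iic 0) = 1/2 := by
    have := h2.symm
    rw [← two_mul] at this
    have h4 : gaussianReal 0 1 (Iic 0) = 2⁻¹ * (2 * gaussianReal 0 1 (Iic 0)) := by
      rw [← mul_assoc, ENNReal.inv_mul_cancel (by norm_num) (by norm_num), one_mul]
    rw [h4, ← this]
    norm_num
  unfold Gstd
  rw [cdf_eq_real, measureReal_def, h3]
  norm_num

lemma Gstd_lt_one : ∃ q : ℝ, 0 < q ∧ Gstd q < 1 := by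
  by_contra h
  push_neg at h
  have hone : ∀ q : ℝ, 0 < q → Gstd q = 1 := fun q hq =>
    le_antisymm (cdf_le_one _ _) (h q hq)
  have hseq : Tendsto (fun k : ℕ => Gstd (1 / (k + 1))) atTop (𝓝 (Gstd 0)) := by
    refine (Gstd_cont.continuousAt.tendsto).comp ?_
    exact tendsto_one_div_add_atTop_nhds_zero_nat
  have : Tendsto (fun _ : ℕ => (1:ℝ)) atTop (𝓝 (Gstd 0)) := by
    refine hseq.congr fun k => ?_
    rw [hone _ (by positivity)]
  rw [tendsto_const_nhds_iff] at this
  rw [Gstd_zero] at this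
  norm_num at this

set_option maxHeartbeats 1000000 in
lemma gauss_cdf_eq (m : ℝ) (v : ℝ≥0) (hv : v ≠ 0) (x : ℝ) :
    cdf (gaussianReal m v) x = Gstd ((x - m) / Real.sqrt v) := by
  have hσ : (0:ℝ) < Real.sqrt v := Real.sqrt_pos.2 (by exact_mod_cast pos_iff_ne_zero.2 hv)
  have hmap : (gaussianReal 0 1).map (fun y => Real.sqrt v * y + m) = gaussianReal m v := by
    have h1 : (gaussianReal 0 1).map (fun y => Real.sqrt v * y) = gaussianReal 0 v := by
      have hvv : NNReal.mk (Real.sqrt v ^ 2) (sq_nonneg _) * 1 = v := by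
        ext
        push_cast
        rw [Real.sq_sqrt v.coe_nonneg, mul_one]
      rw [show (fun y : ℝ => Real.sqrt v * y) = (Real.sqrt v * ·) by rfl,
        gaussianReal_map_const_mul, mul_zero, hvv]
    have h2 : (fun y : ℝ => Real.sqrt v * y + m)
        = (fun y => y + m) ∘ (fun y => Real.sqrt v * y) := rfl
    rw [h2, ← Measure.map_map (by fun_prop) (by fun_prop), h1]
    have := gaussianReal_map_add_const (μ := 0) (v := v) m
    rw [zero_add] at this
    exact this
  haveI : IsProbabilityMeasure ((gaussianReal 0 1).map (fun y => Real.sqrt v * y + m)) :=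
    Measure.isProbabilityMeasure_map (by fun_prop)
  rw [← hmap, cdf_eq_real, measureReal_def]
  unfold Gstd
  rw [cdf_eq_real, measureReal_def]
  congr 1
  rw [Measure.map_apply (by fun_prop) measurableSet_Iic]
  congr 1
  ext y
  simp only [mem_preimage, mem_Iic]
  rw [le_div_iff₀ hσ]
  constructor <;> intro h <;> nlinarith

lemma cdf_tendsto_of_ae {Ω : Type*} [MeasurableSpace Ω] (P : Measure Ω) [IsProbabilityMeasure P]
    (X : ℕ → Ω → ℝ) (Y : Ω → ℝ) (hXmeas : ∀ n, Measurable (X n)) (hYmeas : Measurable Y)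
    (hconv : ∀ᵐ ω ∂P, Tendsto (fun n => X n ω) atTop (𝓝 (Y ω)))
    (x : ℝ) (hx : P.map Y {x} = 0) :
    Tendsto (fun n => cdf (P.map (X n)) x) atTop (𝓝 (cdf (P.map Y) x)) := by
  haveI : ∀ n, IsProbabilityMeasure (P.map (X n)) :=
    fun n => Measure.isProbabilityMeasure_map (hXmeas n).aemeasurable
  haveI : IsProbabilityMeasure (P.map Y) := Measure.isProbabilityMeasure_map hYmeas.aemeasurable
  have hxx : P {ω | Y ω = x} = 0 := by
    rw [Measure.map_apply hYmeas (measurableSet_singleton x)] at hx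
    exact hx
  have key : Tendsto (fun n => ∫ ω, ((X n) ⁻¹' (Iic x)).indicator (1 : Ω → ℝ) ω ∂P) atTop
      (𝓝 (∫ ω, (Y ⁻¹' (Iic x)).indicator (1 : Ω → ℝ) ω ∂P)) := by
    refine tendsto_integral_of_dominated_convergence (fun _ => (1:ℝ)) ?_ ?_ ?_ ?_
    · intro n
      exact ((measurable_one.indicator ((hXmeas n) measurableSet_Iic))).aestronglyMeasurable
    · exact integrable_const 1
    · intro n
      filter_upwards with ω
      by_cases h : ω ∈ (X n) ⁻¹' (Iic x) <;> simp [h]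
    · have hne : ∀ᵐ ω ∂P, Y ω ≠ x := by
        rw [ae_iff]
        simpa using hxx
      filter_upwards [hconv, hne] with ω hω hne
      rcases lt_or_gt_of_ne hne with h | h
      · have : ∀ᶠ n in atTop, X n ω ∈ Iio x := hω (Iio_mem_nhds h)
        have heq : ∀ᶠ n in atTop, ((X n) ⁻¹' (Iic x)).indicator (1 : Ω → ℝ) ω
            = (Y ⁻¹' (Iic x)).indicator (1 : Ω → ℝ) ω := by
          filter_upwards [this] with n hn
          have h1 : ω ∈ X n ⁻¹' Iic x := by simpa using (mem_Iio.1 hn).le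
          have h2 : ω ∈ Y ⁻¹' Iic x := by simpa using h.le
          rw [indicator_of_mem h1, indicator_of_mem h2]
        exact tendsto_const_nhds.congr' (heq.mono fun n h => h.symm)
      · have : ∀ᶠ n in atTop, X n ω ∈ Ioi x := hω (Ioi_mem_nhds h)
        have heq : ∀ᶠ n in atTop, ((X n) ⁻¹' (Iic x)).indicator (1 : Ω → ℝ) ω
            = (Y ⁻¹' (Iic x)).indicator (1 : Ω → ℝ) ω := by
          filter_upwards [this] with n hn
          have h1 : ω ∉ X n ⁻¹' Iic x := by simpa using mem_Ioi.1 hn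
          have h2 : ω ∉ Y ⁻¹' Iic x := by simpa using h
          rw [indicator_of_notMem h1, indicator_of_notMem h2]
        exact tendsto_const_nhds.congr' (heq.mono fun n h => h.symm)
  have hrw : ∀ n, ∫ ω, ((X n) ⁻¹' (Iic x)).indicator (1 : Ω → ℝ) ω ∂P
      = cdf (P.map (X n)) x := by
    intro n
    rw [integral_indicator_one ((hXmeas n) measurableSet_Iic), cdf_eq_real, measureReal_def, measureReal_def,
      Measure.map_apply (hXmeas n) measurableSet_Iic]
  have hrwY : ∫ ω, (Y ⁻¹' (Iic x)).indicator (1 : Ω → ℝ) ω ∂P = cdf (P.map Y) x := by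
    rw [integral_indicator_one (hYmeas measurableSet_Iic), cdf_eq_real, measureReal_def, measureReal_def,
      Measure.map_apply hYmeas measurableSet_Iic]
  rw [← hrwY]
  exact key.congr (fun n => hrw n)

lemma cdf_tendsto_from_right (μ : Measure ℝ) (x : ℝ) (y : ℕ → ℝ)
    (hy : ∀ k, x ≤ y k) (hylim : Tendsto y atTop (𝓝 x)) :
    Tendsto (fun k => cdf μ (y k)) atTop (𝓝 (cdf μ x)) := by
  have hrc : Tendsto (cdf μ) (𝓝[Ici x] x) (𝓝 (cdf μ x)) := (cdf μ).right_continuous x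
  exact hrc.comp (tendsto_nhdsWithin_iff.2 ⟨hylim, Eventually.of_forall fun k => hy k⟩)

lemma exists_seq_right (D : Set ℝ) (hD : ∀ u w : ℝ, u < w → ∃ x ∈ D, u < x ∧ x < w) (x : ℝ) :
    ∃ y : ℕ → ℝ, (∀ k, y k ∈ D) ∧ (∀ k, x < y k) ∧ Tendsto y atTop (𝓝 x) := by
  have h : ∀ k : ℕ, ∃ z, z ∈ D ∧ x < z ∧ z < x + 1/(k+1) := by
    intro k
    obtain ⟨z, hz, hz1, hz2⟩ := hD x (x + 1/(k+1)) (lt_add_of_pos_right x (by positivity))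
    exact ⟨z, hz, hz1, hz2⟩
  choose y hyD hy1 hy2 using h
  refine ⟨y, hyD, hy1, ?_⟩
  have hup : Tendsto (fun k : ℕ => x + 1/((k:ℝ)+1)) atTop (𝓝 x) := by
    have := tendsto_one_div_add_atTop_nhds_zero_nat (𝕜 := ℝ)
    simpa using (tendsto_const_nhds (x := x)).add this
  exact tendsto_of_tendsto_of_tendsto_of_le_of_le tendsto_const_nhds hup
    (fun k => (hy1 k).le) (fun k => (hy2 k).le)

theorem caseB {Ω : Type*} [MeasurableSpace Ω] (P : Measure Ω) [IsProbabilityMeasure P]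
    (X : ℕ → Ω → ℝ) (Y : Ω → ℝ) (m : ℕ → ℝ) (v : ℕ → ℝ≥0)
    (hXmeas : ∀ n, Measurable (X n)) (hYmeas : Measurable Y)
    (hmv : ∀ n, P.map (X n) = gaussianReal (m n) (v n))
    (hconv : ∀ᵐ ω ∂P, Tendsto (fun n => X n ω) atTop (𝓝 (Y ω)))
    (hB : ∀ᶠ n in atTop, v n ≠ 0) :
    ∃ (c : ℝ) (w : ℝ≥0), P.map Y = gaussianReal c w := by
  haveI : IsProbabilityMeasure (P.map Y) := Measure.isProbabilityMeasure_map hYmeas.aemeasurable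
  set σ : ℕ → ℝ := fun n => Real.sqrt (v n) with hσdef
  set F : ℝ → ℝ := fun x => cdf (P.map Y) x with hFdef
  -- density of non-atoms
  have hcnt : Set.Countable {x : ℝ | P.map Y {x} ≠ 0} := by
    have h := MeasureTheory.Measure.countable_meas_pos_of_disjoint_iUnion
      (μ := P.map Y) (As := fun x : ℝ => {x}) (fun x => measurableSet_singleton x)
      (fun i j hij => by simp [Function.onFun, hij])
    convert h using 1
    ext x
    simp [pos_iff_ne_zero]
  have hDense : Dense {x : ℝ | P.map Y {x} = 0} := by
    have heq : {x : ℝ | P.map Y {x} = 0} = {x : ℝ | P.map Y {x} ≠ 0}ᶜ := by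
      ext x; simp
    rw [heq]
    exact hcnt.dense_compl ℝ
  have hDpick : ∀ u w : ℝ, u < w → ∃ x, P.map Y {x} = 0 ∧ u < x ∧ x < w := by
    intro u w huw
    obtain ⟨x, hx, hxm⟩ := hDense.exists_between huw
    exact ⟨x, hx, hxm.1, hxm.2⟩
  have htendsto : ∀ x, P.map Y {x} = 0 →
      Tendsto (fun n => cdf (P.map (X n)) x) atTop (𝓝 (F x)) :=
    fun x hx => cdf_tendsto_of_ae P X Y hXmeas hYmeas hconv x hx
  obtain ⟨q, hq0, hq1⟩ := Gstd_lt_one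
  have hGhalf : ∀ y : ℝ, 0 ≤ y → (1:ℝ)/2 ≤ Gstd y := by
    intro y hy
    rw [← Gstd_zero]
    exact monotone_cdf _ hy
  -- pick continuity point c with F c > Gstd q
  obtain ⟨c, hcD, hcF⟩ : ∃ c, P.map Y {c} = 0 ∧ Gstd q < F c := by
    have h1 : Tendsto F atTop (𝓝 1) := tendsto_cdf_atTop _
    have h2 : ∀ᶠ x in atTop, Gstd q < F x := h1.eventually (eventually_gt_nhds hq1)
    obtain ⟨c₀, hc₀⟩ := eventually_atTop.1 h2
    obtain ⟨c, hcD, hc1, _⟩ := hDpick c₀ (c₀ + 1) (lt_add_one c₀)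
    exact ⟨c, hcD, hc₀ c hc1.le⟩
  -- pick continuity point a with F a < 1/2
  obtain ⟨a, haD, haF⟩ : ∃ a, P.map Y {a} = 0 ∧ F a < 1/2 := by
    have h1 : Tendsto F atBot (𝓝 0) := tendsto_cdf_atBot _
    have h2 : ∀ᶠ x in atBot, F x < 1/2 := h1.eventually (eventually_lt_nhds (by norm_num))
    obtain ⟨a₀, ha₀⟩ := eventually_atBot.1 h2
    obtain ⟨a, haD, _, ha2⟩ := hDpick (a₀ - 1) a₀ (by linarith)
    exact ⟨a, haD, ha₀ a ha2.le⟩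
  -- eventual bounds on (m n, σ n)
  have hbound : ∀ᶠ n in atTop, (m n ∈ Icc a c ∧ σ n ∈ Icc 0 ((c - a)/q)) ∧ v n ≠ 0 := by
    have hFc := (htendsto c hcD).eventually (eventually_gt_nhds hcF)
    have hFa := (htendsto a haD).eventually (eventually_lt_nhds haF)
    filter_upwards [hFc, hFa, hB] with n h1 h2 h3
    have hσpos : 0 < σ n := Real.sqrt_pos.2 (by exact_mod_cast pos_iff_ne_zero.2 h3)
    have hcdfc : cdf (P.map (X n)) c = Gstd ((c - m n)/σ n) := by
      rw [hmv n, gauss_cdf_eq _ _ h3]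
    have hcdfa : cdf (P.map (X n)) a = Gstd ((a - m n)/σ n) := by
      rw [hmv n, gauss_cdf_eq _ _ h3]
    rw [hcdfc] at h1
    rw [hcdfa] at h2
    -- m n ≤ c
    have hmc : m n ≤ c := by
      by_contra h
      push_neg at h
      have harg : (c - m n)/σ n ≤ 0 := div_nonpos_of_nonpos_of_nonneg (by linarith) hσpos.le
      have := (monotone_cdf (gaussianReal 0 1)) harg
      have h5 := hGhalf q hq0.le
      have h6 : Gstd ((c - m n)/σ n) ≤ Gstd 0 := this
      rw [Gstd_zero] at h6
      -- Gstd q < Gstd(arg) ≤ 1/2 ≤ Gstd q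
      linarith [h1, h6, h5]
    -- a < m n
    have ham : a < m n := by
      by_contra h
      push_neg at h
      have harg : (0:ℝ) ≤ (a - m n)/σ n := div_nonneg (by linarith) hσpos.le
      have h6 := hGhalf _ harg
      linarith
    -- σ n ≤ (c-a)/q
    have hσle : σ n ≤ (c - a)/q := by
      have hq' : q < (c - m n)/σ n := by
        by_contra h
        push_neg at h
        have := (monotone_cdf (gaussianReal 0 1)) h
        have h6 : Gstd ((c - m n)/σ n) ≤ Gstd q := this
        linarith
      rw [lt_div_iff₀ hσpos] at hq'
      rw [le_div_iff₀ hq0]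
      nlinarith
    exact ⟨⟨⟨ham.le, hmc⟩, ⟨hσpos.le, hσle⟩⟩, h3⟩
  obtain ⟨N₁, hN₁⟩ := eventually_atTop.1 hbound
  -- compactness
  have hK : IsCompact ((Icc a c) ×ˢ (Icc 0 ((c - a)/q))) := isCompact_Icc.prod isCompact_Icc
  have hmem : ∀ k : ℕ, (m (k + N₁), σ (k + N₁)) ∈ (Icc a c) ×ˢ (Icc 0 ((c - a)/q)) := by
    intro k
    have := (hN₁ (k + N₁) (Nat.le_add_left _ _)).1
    exact ⟨this.1, this.2⟩
  obtain ⟨⟨m₀, σ₀⟩, hmemK, φ, hφ, hlim⟩ := hK.tendsto_subseq hmem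
  set ψ : ℕ → ℕ := fun k => φ k + N₁ with hψdef
  have hψmono : StrictMono ψ := fun i j hij => by
    simp only [hψdef]
    exact Nat.add_lt_add_right (hφ hij) N₁
  have hmlim : Tendsto (fun k => m (ψ k)) atTop (𝓝 m₀) :=
    (continuous_fst.tendsto _).comp hlim
  have hσlim : Tendsto (fun k => σ (ψ k)) atTop (𝓝 σ₀) :=
    (continuous_snd.tendsto _).comp hlim
  have hσ₀nonneg : 0 ≤ σ₀ := hmemK.2.1
  have hψv : ∀ k, v (ψ k) ≠ 0 := fun k => (hN₁ (ψ k) (Nat.le_add_left _ _)).2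
  have hψσpos : ∀ k, 0 < σ (ψ k) :=
    fun k => Real.sqrt_pos.2 (by exact_mod_cast pos_iff_ne_zero.2 (hψv k))
  have hcdfψ : ∀ k x, cdf (P.map (X (ψ k))) x = Gstd ((x - m (ψ k)) / σ (ψ k)) :=
    fun k x => by rw [hmv, gauss_cdf_eq _ _ (hψv k)]
  have hFlim : ∀ x, P.map Y {x} = 0 →
      Tendsto (fun k => Gstd ((x - m (ψ k))/σ (ψ k))) atTop (𝓝 (F x)) := by
    intro x hx
    exact (((htendsto x hx).comp hψmono.tendsto_atTop).congr (fun k => hcdfψ k x))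
  have hDpick' : ∀ u w : ℝ, u < w → ∃ z ∈ {x : ℝ | P.map Y {x} = 0}, u < z ∧ z < w := by
    intro u w huw
    obtain ⟨z, h1, h2, h3⟩ := hDpick u w huw
    exact ⟨z, h1, h2, h3⟩
  by_cases hσ0 : σ₀ = 0
  · -- degenerate limit : dirac
    have h1 : ∀ x, P.map Y {x} = 0 → m₀ < x → F x = 1 := by
      intro x hx hmx
      have hnum : Tendsto (fun k => x - m (ψ k)) atTop (𝓝 (x - m₀)) :=
        tendsto_const_nhds.sub hmlim
      have hinv : Tendsto (fun k => (σ (ψ k))⁻¹) atTop atTop := by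
        apply tendsto_inv_nhdsGT_zero.comp
        rw [tendsto_nhdsWithin_iff]
        exact ⟨by simpa [hσ0] using hσlim, Eventually.of_forall fun k => hψσpos k⟩
      have harg : Tendsto (fun k => (x - m (ψ k)) / σ (ψ k)) atTop atTop := by
        have h := Filter.Tendsto.pos_mul_atTop (by linarith : (0:ℝ) < x - m₀) hnum hinv
        exact h.congr fun k => (div_eq_mul_inv _ _).symm
      have hG1 : Tendsto (fun k => Gstd ((x - m (ψ k))/σ (ψ k))) atTop (𝓝 1) :=
        (tendsto_cdf_atTop (gaussianReal 0 1)).comp harg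
      exact tendsto_nhds_unique (hFlim x hx) hG1
    have h0 : ∀ x, P.map Y {x} = 0 → x < m₀ → F x = 0 := by
      intro x hx hmx
      have hnum : Tendsto (fun k => x - m (ψ k)) atTop (𝓝 (x - m₀)) :=
        tendsto_const_nhds.sub hmlim
      have hinv : Tendsto (fun k => (σ (ψ k))⁻¹) atTop atTop := by
        apply tendsto_inv_nhdsGT_zero.comp
        rw [tendsto_nhdsWithin_iff]
        exact ⟨by simpa [hσ0] using hσlim, Eventually.of_forall fun k => hψσpos k⟩
      have harg : Tendsto (fun k => (x - m (ψ k)) / σ (ψ k)) atTop atBot := by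
        have h := Filter.Tendsto.neg_mul_atTop (by linarith : x - m₀ < 0) hnum hinv
        exact h.congr fun k => (div_eq_mul_inv _ _).symm
      have hG0 : Tendsto (fun k => Gstd ((x - m (ψ k))/σ (ψ k))) atTop (𝓝 0) :=
        (tendsto_cdf_atBot (gaussianReal 0 1)).comp harg
      exact tendsto_nhds_unique (hFlim x hx) hG0
    refine ⟨m₀, 0, ?_⟩
    rw [gaussianReal_zero_var]
    refine Measure.ext_of_Iic _ _ (fun x => ?_)
    rw [← ofReal_cdf, ← ofReal_cdf]
    congr 1
    have hdirac : cdf (Measure.dirac m₀) x = if m₀ ≤ x then 1 else 0 := by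
      rw [cdf_eq_real, measureReal_def, Measure.dirac_apply' _ measurableSet_Iic]
      by_cases h : m₀ ≤ x
      · simp [indicator, mem_Iic, h]
      · simp [indicator, mem_Iic, h]
    rw [hdirac]
    by_cases hxm : m₀ ≤ x
    · rw [if_pos hxm]
      obtain ⟨y, hyD, hy1, hylim⟩ := exists_seq_right _ hDpick' x
      have hten := cdf_tendsto_from_right (P.map Y) x y (fun k => (hy1 k).le) hylim
      have hone : ∀ k, cdf (P.map Y) (y k) = 1 :=
        fun k => h1 (y k) (hyD k) (lt_of_le_of_lt hxm (hy1 k))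
      exact tendsto_nhds_unique (hten.congr hone) tendsto_const_nhds
    · rw [if_neg hxm]
      push_neg at hxm
      obtain ⟨z, hzD, hz1, hz2⟩ := hDpick x m₀ hxm
      show F x = 0
      have h5 : F x ≤ F z := monotone_cdf _ hz1.le
      rw [h0 z hzD hz2] at h5
      exact le_antisymm h5 (cdf_nonneg _ _)
  · -- nondegenerate limit
    have hσpos : 0 < σ₀ := lt_of_le_of_ne hσ₀nonneg (Ne.symm hσ0)
    have hFeq : ∀ x, P.map Y {x} = 0 → F x = Gstd ((x - m₀)/σ₀) := by
      intro x hx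
      have harg : Tendsto (fun k => (x - m (ψ k))/σ (ψ k)) atTop (𝓝 ((x - m₀)/σ₀)) :=
        (tendsto_const_nhds.sub hmlim).div hσlim (ne_of_gt hσpos)
      exact tendsto_nhds_unique (hFlim x hx) ((Gstd_cont.tendsto _).comp harg)
    refine ⟨m₀, ⟨σ₀, hσ₀nonneg⟩^2, ?_⟩
    have hv₀ne : (⟨σ₀, hσ₀nonneg⟩^2 : ℝ≥0) ≠ 0 :=
      pow_ne_zero _ (fun h => hσ0 (congrArg NNReal.toReal h))
    have hsqrt : Real.sqrt (((⟨σ₀, hσ₀nonneg⟩^2 : ℝ≥0)):ℝ) = σ₀ := by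
      push_cast
      exact Real.sqrt_sq hσ₀nonneg
    refine Measure.ext_of_Iic _ _ (fun x => ?_)
    rw [← ofReal_cdf, ← ofReal_cdf]
    congr 1
    have hgcdf : cdf (gaussianReal m₀ (⟨σ₀, hσ₀nonneg⟩^2 : ℝ≥0)) x = Gstd ((x - m₀)/σ₀) := by
      rw [gauss_cdf_eq _ _ hv₀ne, hsqrt]
    rw [hgcdf]
    obtain ⟨y, hyD, hy1, hylim⟩ := exists_seq_right _ hDpick' x
    have hten := cdf_tendsto_from_right (P.map Y) x y (fun k => (hy1 k).le) hylim
    have hvals : ∀ k, cdf (P.map Y) (y k) = Gstd ((y k - m₀)/σ₀) :=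
      fun k => hFeq (y k) (hyD k)
    have hlimR : Tendsto (fun k => Gstd ((y k - m₀)/σ₀)) atTop (𝓝 (Gstd ((x - m₀)/σ₀))) :=
      (Gstd_cont.tendsto _).comp ((hylim.sub tendsto_const_nhds).div_const σ₀)
    exact tendsto_nhds_unique (hten.congr hvals) hlimR

lemma caseA {Ω : Type*} [MeasurableSpace Ω] (P : Measure Ω) [IsProbabilityMeasure P]
    (X : ℕ → Ω → ℝ) (Y : Ω → ℝ) (m : ℕ → ℝ) (v : ℕ → ℝ≥0)
    (hXmeas : ∀ n, Measurable (X n))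
    (hmv : ∀ n, P.map (X n) = gaussianReal (m n) (v n))
    (hconv : ∀ᵐ ω ∂P, Tendsto (fun n => X n ω) atTop (𝓝 (Y ω)))
    (hA : ∃ᶠ n in atTop, v n = 0) :
    ∃ (c : ℝ) (w : ℝ≥0), P.map Y = gaussianReal c w := by
  obtain ⟨ψ, hψmono, hψ0⟩ := extraction_of_frequently_atTop hA
  have hdir : ∀ k, ∀ᵐ ω ∂P, X (ψ k) ω = m (ψ k) := by
    intro k
    have hmap : P.map (X (ψ k)) = Measure.dirac (m (ψ k)) := by
      rw [hmv (ψ k), hψ0 k, gaussianReal_zero_var]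
    have h0 : P ((X (ψ k)) ⁻¹' ({m (ψ k)}ᶜ)) = 0 := by
      rw [← Measure.map_apply (hXmeas _) (measurableSet_singleton _).compl, hmap,
        Measure.dirac_apply' _ (measurableSet_singleton _).compl]
      simp
    rw [ae_iff]
    convert h0 using 2; rfl
  have hae : ∀ᵐ ω ∂P, (∀ k, X (ψ k) ω = m (ψ k))
      ∧ Tendsto (fun n => X n ω) atTop (𝓝 (Y ω)) := ((ae_all_iff).2 hdir).and hconv
  haveI : (ae P).NeBot := ae_neBot.2 (IsProbabilityMeasure.ne_zero P)
  obtain ⟨ω₀, hω₀⟩ := hae.exists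
  have hmc : Tendsto (fun k => m (ψ k)) atTop (𝓝 (Y ω₀)) := by
    have h := hω₀.2.comp hψmono.tendsto_atTop
    exact h.congr fun k => hω₀.1 k
  have hYc : Y =ᵐ[P] fun _ => Y ω₀ := by
    filter_upwards [hae] with ω hω
    have h1 : Tendsto (fun k => m (ψ k)) atTop (𝓝 (Y ω)) :=
      (hω.2.comp hψmono.tendsto_atTop).congr fun k => hω.1 k
    exact tendsto_nhds_unique h1 hmc
  refine ⟨Y ω₀, 0, ?_⟩
  rw [gaussianReal_zero_var, Measure.map_congr hYc, Measure.map_const]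
  simp

/-- An almost-surely convergent sequence of real Gaussian random variables converges to a
Gaussian random variable (possibly degenerate, i.e. with zero variance). -/
theorem stmt_6 {Ω : Type*} [MeasurableSpace Ω] (P : Measure Ω) [IsProbabilityMeasure P]
    (X : ℕ → Ω → ℝ) (Y : Ω → ℝ)
    (hXmeas : ∀ n, Measurable (X n))
    (hXgauss : ∀ n, ∃ (m : ℝ) (v : ℝ≥0), P.map (X n) = gaussianReal m v)
    (hconv : ∀ᵐ ω ∂P, Tendsto (fun n => X n ω) atTop (nhds (Y ω))) :
    ∃ (m : ℝ) (v : ℝ≥0), P.map Y = gaussianReal m v := by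
  choose m v hmv using hXgauss
  have hY : AEMeasurable Y P :=
    aemeasurable_of_tendsto_metrizable_ae _ (fun n => (hXmeas n).aemeasurable) hconv
  have hae : Y =ᵐ[P] hY.mk Y := hY.ae_eq_mk
  have hconv' : ∀ᵐ ω ∂P, Tendsto (fun n => X n ω) atTop (𝓝 (hY.mk Y ω)) := by
    filter_upwards [hconv, hae] with ω h1 h2
    rwa [h2] at h1
  have hmain : ∃ (c : ℝ) (w : ℝ≥0), P.map (hY.mk Y) = gaussianReal c w := by
    by_cases hA : ∃ᶠ n in atTop, v n = 0
    · exact caseA P X (hY.mk Y) m v hXmeas hmv hconv' hA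
    · rw [not_frequently] at hA
      exact caseB P X (hY.mk Y) m v hXmeas hY.measurable_mk hmv hconv'
        (hA.mono fun n h => by simpa using h)
  obtain ⟨c, w, hcw⟩ := hmain
  exact ⟨c, w, by rwa [Measure.map_congr hae]⟩
end

section
/- (Kriging update formula for the mean, finite-dimensional.) In the setting of the previous statement, let m ∈ ℝ^d and (y₁, y₂) ∈ ℝ^{p₁} × ℝ^{p₂} = ℝ^{p₁+p₂}. Define m^{(1)}(y₁) := m + K G₁ᵀ K₁^{-1} (y₁ − G₁ m). Then m + K Gᵀ K_G^{-1} ((y₁,y₂) − G m) = m^{(1)}(y₁) + K^{(1)} G₂ᵀ K₂^{-1} (y₂ − G₂ m^{(1)}(y₁)). -/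
open Matrix

private lemma aux_block_inv {n₁ n₂ : Type} [Fintype n₁] [Fintype n₂] [DecidableEq n₁]
    [DecidableEq n₂]
    (A : Matrix n₁ n₁ ℝ) (B : Matrix n₁ n₂ ℝ) (C : Matrix n₂ n₁ ℝ) (D : Matrix n₂ n₂ ℝ)
    (A' : Matrix n₁ n₁ ℝ) (S' : Matrix n₂ n₂ ℝ)
    (hA : A * A' = 1) (hS : (D - C * A' * B) * S' = 1) :
    fromBlocks A B C D *
      fromBlocks (A' + A' * B * S' * C * A') (-(A' * B * S')) (-(S' * C * A')) S' = 1 := by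
  have hAx : ∀ {k : Type} [Fintype k] (X : Matrix n₁ k ℝ), A * (A' * X) = X := by
    intro k _ X; rw [← Matrix.mul_assoc, hA, Matrix.one_mul]
  have hSx : ∀ {k : Type} [Fintype k] (X : Matrix n₂ k ℝ),
      D * (S' * X) - C * (A' * (B * (S' * X))) = X := by
    intro k _ X
    have := congrArg (· * X) hS
    simpa [Matrix.sub_mul, Matrix.mul_assoc] using this
  rw [Matrix.fromBlocks_multiply]
  have h11 : A * (A' + A' * B * S' * C * A') + B * -(S' * C * A') = 1 := by
    simp only [Matrix.mul_add, Matrix.mul_neg, Matrix.mul_assoc, hAx, hA]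
    abel
  have h12 : A * -(A' * B * S') + B * S' = 0 := by
    simp only [Matrix.mul_neg, Matrix.mul_assoc, hAx]
    abel
  have h21 : C * (A' + A' * B * S' * C * A') + D * -(S' * C * A') = 0 := by
    have h := hSx (C * A')
    rw [sub_eq_iff_eq_add] at h
    simp only [Matrix.mul_add, Matrix.mul_neg, Matrix.mul_assoc, h]
    abel
  have h22 : C * -(A' * B * S') + D * S' = 1 := by
    have h := hSx (1 : Matrix n₂ n₂ ℝ)
    simp only [Matrix.mul_one] at h
    simp only [Matrix.mul_neg, Matrix.mul_assoc, ← h]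
    abel
  rw [h11, h12, h21, h22, ← Matrix.fromBlocks_one]

private lemma aux_key {d p₁ p₂ : ℕ} (K : Matrix (Fin d) (Fin d) ℝ)
    (G₁ : Matrix (Fin p₁) (Fin d) ℝ) (G₂ : Matrix (Fin p₂) (Fin d) ℝ)
    (A' : Matrix (Fin p₁) (Fin p₁) ℝ) (S' : Matrix (Fin p₂) (Fin p₂) ℝ) :
    K * (fromRows G₁ G₂)ᵀ *
        fromBlocks (A' + A' * (G₁ * K * G₂ᵀ) * S' * (G₂ * K * G₁ᵀ) * A')
          (-(A' * (G₁ * K * G₂ᵀ) * S')) (-(S' * (G₂ * K * G₁ᵀ) * A')) S'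
      = fromCols
          (K * G₁ᵀ * A'
            - (K - K * G₁ᵀ * A' * G₁ * K) * G₂ᵀ * S' * (G₂ * (K * G₁ᵀ * A')))
          ((K - K * G₁ᵀ * A' * G₁ * K) * G₂ᵀ * S') := by
  rw [transpose_fromRows, mul_fromCols, fromCols_mul_fromBlocks]
  have e1 : K * G₁ᵀ * (A' + A' * (G₁ * K * G₂ᵀ) * S' * (G₂ * K * G₁ᵀ) * A')
        + K * G₂ᵀ * -(S' * (G₂ * K * G₁ᵀ) * A')
      = K * G₁ᵀ * A'
          - (K - K * G₁ᵀ * A' * G₁ * K) * G₂ᵀ * S' * (G₂ * (K * G₁ᵀ * A')) := by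
    simp only [Matrix.mul_add, Matrix.mul_neg, Matrix.sub_mul, Matrix.mul_sub,
      Matrix.mul_assoc]
    abel
  have e2 : K * G₁ᵀ * -(A' * (G₁ * K * G₂ᵀ) * S') + K * G₂ᵀ * S'
      = (K - K * G₁ᵀ * A' * G₁ * K) * G₂ᵀ * S' := by
    simp only [Matrix.mul_neg, Matrix.sub_mul, Matrix.mul_assoc]
    abel
  rw [e1, e2]

/-- Kriging/Gaussian update formula for the mean (finite-dimensional): the jointly
conditioned mean equals the sequentially updated mean. Here `K^{(1)}` denotes the
one-step conditional covariance and `m^{(1)}(y₁)` the one-step conditional mean. -/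
theorem stmt_12 {d p₁ p₂ : ℕ} (K : Matrix (Fin d) (Fin d) ℝ) (hK : K.PosSemidef)
    (G₁ : Matrix (Fin p₁) (Fin d) ℝ) (G₂ : Matrix (Fin p₂) (Fin d) ℝ)
    (hK₁ : IsUnit (G₁ * K * G₁ᵀ).det)
    (hK₂ : IsUnit (G₂ * (K - K * G₁ᵀ * (G₁ * K * G₁ᵀ)⁻¹ * G₁ * K) * G₂ᵀ).det)
    (hKG : IsUnit ((fromRows G₁ G₂) * K * (fromRows G₁ G₂)ᵀ).det)
    (m : Fin d → ℝ) (y₁ : Fin p₁ → ℝ) (y₂ : Fin p₂ → ℝ) :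
    m + (K * (fromRows G₁ G₂)ᵀ * ((fromRows G₁ G₂) * K * (fromRows G₁ G₂)ᵀ)⁻¹) *ᵥ
        (Sum.elim y₁ y₂ - (fromRows G₁ G₂) *ᵥ m)
      = (m + (K * G₁ᵀ * (G₁ * K * G₁ᵀ)⁻¹) *ᵥ (y₁ - G₁ *ᵥ m))
        + ((K - K * G₁ᵀ * (G₁ * K * G₁ᵀ)⁻¹ * G₁ * K) * G₂ᵀ
            * (G₂ * (K - K * G₁ᵀ * (G₁ * K * G₁ᵀ)⁻¹ * G₁ * K) * G₂ᵀ)⁻¹) *ᵥ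
          (y₂ - G₂ *ᵥ (m + (K * G₁ᵀ * (G₁ * K * G₁ᵀ)⁻¹) *ᵥ (y₁ - G₁ *ᵥ m))) := by
  have hA : (G₁ * K * G₁ᵀ) * (G₁ * K * G₁ᵀ)⁻¹ = 1 := Matrix.mul_nonsing_inv _ hK₁
  have hS : (G₂ * (K - K * G₁ᵀ * (G₁ * K * G₁ᵀ)⁻¹ * G₁ * K) * G₂ᵀ)
      * (G₂ * (K - K * G₁ᵀ * (G₁ * K * G₁ᵀ)⁻¹ * G₁ * K) * G₂ᵀ)⁻¹ = 1 :=
    Matrix.mul_nonsing_inv _ hK₂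
  have hSeq : G₂ * (K - K * G₁ᵀ * (G₁ * K * G₁ᵀ)⁻¹ * G₁ * K) * G₂ᵀ
      = G₂ * K * G₂ᵀ - G₂ * K * G₁ᵀ * (G₁ * K * G₁ᵀ)⁻¹ * (G₁ * K * G₂ᵀ) := by
    simp only [Matrix.mul_sub, Matrix.sub_mul, Matrix.mul_assoc]
  have hG : (fromRows G₁ G₂) * K * (fromRows G₁ G₂)ᵀ
      = fromBlocks (G₁ * K * G₁ᵀ) (G₁ * K * G₂ᵀ) (G₂ * K * G₁ᵀ) (G₂ * K * G₂ᵀ) := by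
    rw [transpose_fromRows, fromRows_mul, fromRows_mul_fromCols]
  set A' := (G₁ * K * G₁ᵀ)⁻¹ with hA'def
  set S' := (G₂ * (K - K * G₁ᵀ * (G₁ * K * G₁ᵀ)⁻¹ * G₁ * K) * G₂ᵀ)⁻¹ with hS'def
  have hNinv : ((fromRows G₁ G₂) * K * (fromRows G₁ G₂)ᵀ)⁻¹
      = fromBlocks (A' + A' * (G₁ * K * G₂ᵀ) * S' * (G₂ * K * G₁ᵀ) * A')
          (-(A' * (G₁ * K * G₂ᵀ) * S')) (-(S' * (G₂ * K * G₁ᵀ) * A')) S' := by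
    apply Matrix.inv_eq_right_inv
    rw [hG]
    exact aux_block_inv _ _ _ _ _ _ hA (by rw [← hSeq]; exact hS)
  have hKey := aux_key K G₁ G₂ A' S'
  rw [hNinv, hKey]
  set P := K * G₁ᵀ * A' with hPdef
  set Q := (K - K * G₁ᵀ * A' * G₁ * K) * G₂ᵀ * S' with hQdef
  have hv : Sum.elim y₁ y₂ - (fromRows G₁ G₂) *ᵥ m
      = Sum.elim (y₁ - G₁ *ᵥ m) (y₂ - G₂ *ᵥ m) := by
    rw [fromRows_mulVec]
    ext (i | i) <;> simp
  rw [hv, fromCols_mulVec_sumElim]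
  simp only [Matrix.sub_mulVec, Matrix.mulVec_sub, Matrix.mulVec_add,
    ← Matrix.mulVec_mulVec]
  abel
end
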